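/- arXiv:2403.12584 — 2 statements merged into one kernel-verified Lean document; each statement's English description precedes it below -/
import Mathlib

section
/- Let s₂ ∈ ℝ, t_go > 0, Λ ∈ {2,3}, and reals p, a_p, Φ with Φ ≥ |p·t_go²/12 + a_p|. Then s₂·( ((Λ-4)/t_go)·s₂ + p·t_go²/12 + a_p - Φ·sign(s₂) ) ≤ ((Λ-4)/t_go)·s₂² ≤ 0, where sign is the standard signum function. -/
theorem stmt_6 (s₂ tgo Λ p ap Φ : ℝ) (hΛ : Λ = 2 ∨ Λ = 3) (htgo : 0 < tgo)
    (hΦ : |p * tgo ^ 2 / 12 + ap| ≤ Φ) :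
    s₂ * (((Λ - 4) / tgo) * s₂ + p * tgo ^ 2 / 12 + ap - Φ * Real.sign s₂)
        ≤ ((Λ - 4) / tgo) * s₂ ^ 2 ∧
    ((Λ - 4) / tgo) * s₂ ^ 2 ≤ 0 := by
  constructor
  · have h1 : s₂ * Real.sign s₂ = |s₂| := by
      rcases lt_trichotomy s₂ 0 with h | h | h
      · rw [Real.sign_of_neg h, abs_of_neg h]; ring
      · simp [h]
      · rw [Real.sign_of_pos h, abs_of_pos h]; ring
    have h2 : s₂ * (p * tgo ^ 2 / 12 + ap) ≤ |s₂| * Φ := by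
      calc s₂ * (p * tgo ^ 2 / 12 + ap) ≤ |s₂ * (p * tgo ^ 2 / 12 + ap)| := le_abs_self _
        _ = |s₂| * |p * tgo ^ 2 / 12 + ap| := abs_mul _ _
        _ ≤ |s₂| * Φ := by
            exact mul_le_mul_of_nonneg_left hΦ (abs_nonneg _)
    have key : s₂ * (((Λ - 4) / tgo) * s₂ + p * tgo ^ 2 / 12 + ap - Φ * Real.sign s₂)
        = ((Λ - 4) / tgo) * s₂ ^ 2 + s₂ * (p * tgo ^ 2 / 12 + ap) - Φ * |s₂| := by
      rw [← h1]; ring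
    rw [key]; nlinarith [h2]
  · have hneg : (Λ - 4) / tgo ≤ 0 := by
      rcases hΛ with h | h <;> subst h <;>
        exact div_nonpos_of_nonpos_of_nonneg (by norm_num) htgo.le
    nlinarith [sq_nonneg s₂]
end

section
/- Let l₁, l₂, l₃ > 0 and p(d) = l₂·l₃·d·exp(-l₂/(d² + l₁))/(d² + l₁)² for d > 0. Then p attains its maximum over (0, ∞) at d* = √( (√(l₂² - 2l₁l₂ + 4l₁²) + l₂ - l₁)/3 ), i.e., d* is a critical point of p: p'(d*) = 0. -/
/-! The numerator of `p'(d)` is, up to positive factors, the quadratic `-3t² + 2(l₂ - l₁)t + l₁²`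
in `t = d²`. Its roots are `x* = d*²` and a negative one, so for `d > 0` the sign of `p'(d)` is the
sign of `x* - d²`: `p` increases on `(0, d*]` and decreases on `[d*, ∞)`. -/

open Set Real

theorem isMaxOn_Ici_of_deriv_pos_of_deriv_neg {f : ℝ → ℝ} {a m : ℝ} (hf : Continuous f)
    (hpos : ∀ x ∈ Ioo a m, 0 < deriv f x) (hneg : ∀ x ∈ Ioi m, deriv f x < 0) :
    IsMaxOn f (Ici a) m := by
  intro x (hx : a ≤ x)
  rcases le_or_gt x m with hxm | hmx
  · have hmono : StrictMonoOn f (Icc a m) :=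
      strictMonoOn_of_deriv_pos (convex_Icc a m) hf.continuousOn (by rwa [interior_Icc])
    exact hmono.monotoneOn ⟨hx, hxm⟩ ⟨hx.trans hxm, le_rfl⟩ hxm
  · have hanti : StrictAntiOn f (Ici m) :=
      strictAntiOn_of_deriv_neg (convex_Ici m) hf.continuousOn (by rwa [interior_Ici])
    exact hanti.antitoneOn self_mem_Ici hmx.le hmx.le

noncomputable def peakProfile (a b c d : ℝ) : ℝ :=
  b * c * d * exp (-b / (d ^ 2 + a)) / (d ^ 2 + a) ^ 2

noncomputable def criticalSq (a b : ℝ) : ℝ :=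
  (√(b ^ 2 - 2 * a * b + 4 * a ^ 2) + b - a) / 3

section criticalSq

variable {a : ℝ} (b : ℝ)

theorem abs_sub_lt_sqrt_discr (ha : a ≠ 0) : |b - a| < √(b ^ 2 - 2 * a * b + 4 * a ^ 2) := by
  rw [← sqrt_sq_eq_abs]
  exact sqrt_lt_sqrt (sq_nonneg _) (by nlinarith [pow_pos (abs_pos.mpr ha) 2, sq_abs a])

theorem criticalSq_pos (ha : a ≠ 0) : 0 < criticalSq a b := by
  have := abs_sub_lt_sqrt_discr b ha
  unfold criticalSq
  linarith [neg_abs_le (b - a)]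

theorem quadratic_eq_criticalSq_sub_mul (t : ℝ) :
    -3 * t ^ 2 + 2 * (b - a) * t + a ^ 2
      = (criticalSq a b - t) * (3 * t + 3 * criticalSq a b - 2 * (b - a)) := by
  have hs : √(b ^ 2 - 2 * a * b + 4 * a ^ 2) ^ 2 = b ^ 2 - 2 * a * b + 4 * a ^ 2 :=
    sq_sqrt (by nlinarith [sq_nonneg (b - a), sq_nonneg a])
  unfold criticalSq
  linear_combination (-1 / 3 : ℝ) * hs

theorem cofactor_pos (ha : a ≠ 0) {t : ℝ} (ht : 0 ≤ t) :
    0 < 3 * t + 3 * criticalSq a b - 2 * (b - a) := by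
  have := abs_sub_lt_sqrt_discr b ha
  unfold criticalSq
  linarith [le_abs_self (b - a)]

end criticalSq

section peakProfile

variable {a : ℝ} (b c : ℝ)

theorem hasDerivAt_peakProfile (ha : 0 < a) (d : ℝ) :
    HasDerivAt (peakProfile a b c)
      (b * c * exp (-b / (d ^ 2 + a)) * (-3 * (d ^ 2) ^ 2 + 2 * (b - a) * d ^ 2 + a ^ 2)
        / (d ^ 2 + a) ^ 4) d := by
  have hu : d ^ 2 + a ≠ 0 := by positivity
  have hsq : HasDerivAt (fun d : ℝ => d ^ 2 + a) (2 * d) d := by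
    simpa using (hasDerivAt_pow 2 d).add_const a
  have hexp : HasDerivAt (fun d : ℝ => exp (-b / (d ^ 2 + a)))
      (exp (-b / (d ^ 2 + a)) * ((0 * (d ^ 2 + a) - -b * (2 * d)) / (d ^ 2 + a) ^ 2)) d :=
    ((hasDerivAt_const d (-b)).div hsq hu).exp
  have hlin : HasDerivAt (fun d : ℝ => b * c * d) (b * c) d := by
    simpa using (hasDerivAt_id d).const_mul (b * c)
  refine ((hlin.mul hexp).div (hsq.pow 2) (pow_ne_zero 2 hu)).congr_deriv ?_
  simp only [Pi.mul_apply, Pi.pow_apply]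
  field_simp
  ring

theorem exists_deriv_peakProfile_eq_mul (ha : 0 < a) (hbc : 0 < b * c) (d : ℝ) :
    ∃ k > 0, deriv (peakProfile a b c) d = k * (criticalSq a b - d ^ 2) := by
  refine ⟨b * c * exp (-b / (d ^ 2 + a)) * (3 * d ^ 2 + 3 * criticalSq a b - 2 * (b - a))
    / (d ^ 2 + a) ^ 4, ?_, ?_⟩
  · have := cofactor_pos b ha.ne' (sq_nonneg d)
    positivity
  · rw [(hasDerivAt_peakProfile b c ha d).deriv, quadratic_eq_criticalSq_sub_mul]
    ring

theorem isMaxOn_peakProfile (ha : 0 < a) (hbc : 0 < b * c) :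
    IsMaxOn (peakProfile a b c) (Ici 0) √(criticalSq a b) := by
  have hx := criticalSq_pos b ha.ne'
  have hcont : Continuous (peakProfile a b c) :=
    Differentiable.continuous fun d => (hasDerivAt_peakProfile b c ha d).differentiableAt
  refine isMaxOn_Ici_of_deriv_pos_of_deriv_neg hcont (fun d hd => ?_) (fun d hd => ?_)
  · obtain ⟨k, hk, hderiv⟩ := exists_deriv_peakProfile_eq_mul b c ha hbc d
    have : d ^ 2 < criticalSq a b := (lt_sqrt hd.1.le).mp hd.2
    rw [hderiv]
    exact mul_pos hk (sub_pos.mpr this)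
  · obtain ⟨k, hk, hderiv⟩ := exists_deriv_peakProfile_eq_mul b c ha hbc d
    have : criticalSq a b < d ^ 2 := (sqrt_lt' ((sqrt_nonneg _).trans_lt hd)).mp hd
    rw [hderiv]
    exact mul_neg_of_pos_of_neg hk (sub_neg.mpr this)

theorem deriv_peakProfile_sqrt_criticalSq (ha : 0 < a) (hbc : 0 < b * c) :
    deriv (peakProfile a b c) √(criticalSq a b) = 0 := by
  obtain ⟨k, -, hderiv⟩ := exists_deriv_peakProfile_eq_mul b c ha hbc √(criticalSq a b)
  rw [hderiv, sq_sqrt (criticalSq_pos b ha.ne').le, sub_self, mul_zero]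

end peakProfile

theorem stmt_8 (l₁ l₂ l₃ : ℝ) (h1 : 0 < l₁) (h2 : 0 < l₂) (h3 : 0 < l₃) :
    IsMaxOn (fun d : ℝ => l₂ * l₃ * d * Real.exp (-l₂ / (d ^ 2 + l₁)) / (d ^ 2 + l₁) ^ 2)
      (Ioi (0:ℝ))
      (Real.sqrt ((Real.sqrt (l₂ ^ 2 - 2 * l₁ * l₂ + 4 * l₁ ^ 2) + l₂ - l₁) / 3)) ∧
    deriv (fun d : ℝ => l₂ * l₃ * d * Real.exp (-l₂ / (d ^ 2 + l₁)) / (d ^ 2 + l₁) ^ 2)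
      (Real.sqrt ((Real.sqrt (l₂ ^ 2 - 2 * l₁ * l₂ + 4 * l₁ ^ 2) + l₂ - l₁) / 3)) = 0 := by
  have hbc : 0 < l₂ * l₃ := mul_pos h2 h3
  exact ⟨(isMaxOn_peakProfile l₂ l₃ h1 hbc).on_subset Ioi_subset_Ici_self,
    deriv_peakProfile_sqrt_criticalSq l₂ l₃ h1 hbc⟩
end
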